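/- With g as above and R₂± = (α₁, 0, 1, u±a₂, ∓a₂/(α₂ρ₂))ᵀ, assuming α₁ρ₁ = c₁ρ and α₂ρ₂ = c₂ρ, the inner product g · R₂± equals a₂²/α₂, which is nonzero. Hence the Shizuta–Kawashima condition g · R ≠ 0 holds for all five equilibrium eigenvectors of the barotropic SHTC system. -/

import Mathlib

/-!
The last two entries of `g` vanish and `R₂±` starts with `(α₁, 0, 1)`, so (indexing from 0)
`g · R₂± = α₁ g₀ + g₂`, independently of the sign and of `u`. The closure `α₂ ρ₂ = c₂ ρ` turns the
factor `(c₂/α₂)(ρ/ρ₂)` in `g₂` into `1`; then the `a₁` terms cancel and the `a₂` terms add up to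
`a₂² (α₁ c₂ + α₂ - α₁ c₂)/α₂² = a₂²/α₂`.
-/

open Matrix

section Field

variable {K : Type*} [Field K]

theorem vec5_dotProduct_vec5_eq (x₀ x₁ x₂ α y₃ y₄ : K) :
    ![x₀, x₁, x₂, 0, 0] ⬝ᵥ ![α, 0, 1, y₃, y₄] = α * x₀ + x₂ := by
  simp [dotProduct, Fin.sum_univ_five, mul_comm]

theorem div_mul_div_eq_one_of_mul_eq {a b c d : K} (h : a * b = c * d) (hab : a * b ≠ 0) :
    c / a * (d / b) = 1 := by
  rw [div_mul_div_comm, ← h, div_self hab]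

/- With `x / 0 = 0` the identity also holds at `α₁ = 0` and `α₁ = 1`. -/
theorem alpha_mul_g₀_add_g₂_eq (a₁ a₂ α₁ c₁ : K) :
    α₁ * (a₁ ^ 2 * c₁ / α₁ ^ 2 + a₂ ^ 2 * (1 - c₁) / (1 - α₁) ^ 2)
      + (-a₁ ^ 2 * c₁ / α₁ + a₂ ^ 2 * (((1 - α₁) - α₁ * (1 - c₁)) / (1 - α₁) ^ 2))
      = a₂ ^ 2 / (1 - α₁) := by
  rcases eq_or_ne α₁ 0 with rfl | hα₁
  · simp
  rcases eq_or_ne (1 - α₁) 0 with hα₂ | hα₂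
  · obtain rfl : α₁ = 1 := (sub_eq_zero.mp hα₂).symm
    simp
  field_simp
  ring

end Field

theorem stmt_12_general (u a₁ a₂ α₁ c₁ ρ ρ₂ : ℝ)
    (ha₂ : 0 < a₂) (hα₁1 : α₁ < 1)
    (hρ₂ : 0 < ρ₂)
    (h2 : (1 - α₁) * ρ₂ = (1 - c₁) * ρ)
    (D : ℝ) (hDdef : D = ((1 - α₁) - α₁ * (1 - c₁)) / (1 - α₁) ^ 2)
    (g : Fin 5 → ℝ)
    (hg : g = ![a₁ ^ 2 * c₁ / α₁ ^ 2 + a₂ ^ 2 * (1 - c₁) / (1 - α₁) ^ 2,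
                -(a₁ ^ 2 / α₁ + a₂ ^ 2 / (1 - α₁)),
                -a₁ ^ 2 * c₁ / α₁ + a₂ ^ 2 * ((1 - c₁) / (1 - α₁)) * (ρ / ρ₂) * D,
                0, 0]) :
    (∀ s : ℝ, s = 1 ∨ s = -1 →
      g ⬝ᵥ ![α₁, 0, 1, u + s * a₂, -(s * (a₂ / ((1 - α₁) * ρ₂)))] = a₂ ^ 2 / (1 - α₁)) ∧
    a₂ ^ 2 / (1 - α₁) ≠ 0 := by
  have hα₂ : 0 < 1 - α₁ := sub_pos.mpr hα₁1
  have hratio : (1 - c₁) / (1 - α₁) * (ρ / ρ₂) = 1 :=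
    div_mul_div_eq_one_of_mul_eq h2 (by positivity)
  refine ⟨fun s _ => ?_, by positivity⟩
  subst hg hDdef
  rw [vec5_dotProduct_vec5_eq, mul_assoc (a₂ ^ 2), hratio, mul_one]
  exact alpha_mul_g₀_add_g₂_eq a₁ a₂ α₁ c₁

/-- Shizuta–Kawashima condition for the fields `R₂±`: `g · R₂± = a₂²/α₂ ≠ 0`. -/
theorem stmt_12 (u a₁ a₂ α₁ c₁ ρ ρ₁ ρ₂ : ℝ)
    (ha₁ : 0 < a₁) (ha₂ : 0 < a₂) (hα₁ : 0 < α₁) (hα₁1 : α₁ < 1)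
    (hc₁ : 0 < c₁) (hc₁1 : c₁ < 1) (hρ : 0 < ρ) (hρ₁ : 0 < ρ₁) (hρ₂ : 0 < ρ₂)
    (h1 : α₁ * ρ₁ = c₁ * ρ) (h2 : (1 - α₁) * ρ₂ = (1 - c₁) * ρ)
    (D : ℝ) (hDdef : D = ((1 - α₁) - α₁ * (1 - c₁)) / (1 - α₁) ^ 2)
    (g : Fin 5 → ℝ)
    (hg : g = ![a₁ ^ 2 * c₁ / α₁ ^ 2 + a₂ ^ 2 * (1 - c₁) / (1 - α₁) ^ 2,
                -(a₁ ^ 2 / α₁ + a₂ ^ 2 / (1 - α₁)),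
                -a₁ ^ 2 * c₁ / α₁ + a₂ ^ 2 * ((1 - c₁) / (1 - α₁)) * (ρ / ρ₂) * D,
                0, 0]) :
    (∀ s : ℝ, s = 1 ∨ s = -1 →
      g ⬝ᵥ ![α₁, 0, 1, u + s * a₂, -(s * (a₂ / ((1 - α₁) * ρ₂)))] = a₂ ^ 2 / (1 - α₁)) ∧
    a₂ ^ 2 / (1 - α₁) ≠ 0 :=
  stmt_12_general u a₁ a₂ α₁ c₁ ρ ρ₂ ha₂ hα₁1 hρ₂ h2 D hDdef g hg
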